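/- Assume the Setup. Let L ∈ A satisfy condition (2), and let U ⊆ M be a k-subspace that is maximal (with respect to inclusion) among all k-subspaces of M satisfying condition (1) for L. Then 𝓜 := {a ∈ A : a·U₀ ⊆ U} = {a ∈ A : ad_{L,L₀}^{N}(a) = 0 for some N ≥ 0}. -/

import Mathlib

/-- `adOp a b x = a*x - x*b`, the operator `ad_{a,b}`. -/
def adOp {A : Type*} [Ring A] (a b : A) : A → A := fun x => a * x - x * b

/-- The ad-nilpotency degree of `b` with respect to `L₀`:
the smallest `n` with `ad_{L₀}^[n+1] b = 0`. -/
noncomputable def degAd {A : Type*} [Ring A] (L₀ b : A) : ℕ :=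
  sInf {n : ℕ | (adOp L₀ L₀)^[n + 1] b = 0}

/-- Condition (2) of Theorem 4.4: `L = L₀` or `deg(L - L₀) < 0`, expressed via some `s' ∈ S`
with `s'(L - L₀)` a nonzero element of `B` of `ad_{L₀}`-degree smaller than that of `s'`. -/
def cond2 {k A : Type*} [CommSemiring k] [Ring A] [Algebra k A]
    (B : Subalgebra k A) (S : Set A) (L₀ L : A) : Prop :=
  L = L₀ ∨ ∃ s' ∈ S, s' * (L - L₀) ∈ B ∧ s' * (L - L₀) ≠ 0 ∧
    degAd L₀ (s' * (L - L₀)) < degAd L₀ s'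

/-- A `k`-subspace of the `A`-module `M` (with `k` acting through `algebraMap k A`). -/
def isSubspace (k A : Type*) {M : Type*} [CommSemiring k] [Ring A] [Algebra k A]
    [AddCommGroup M] [Module A M] (U : Set M) : Prop :=
  (0 : M) ∈ U ∧ (∀ u ∈ U, ∀ v ∈ U, u + v ∈ U) ∧
    (∀ c : k, ∀ u ∈ U, (algebraMap k A c) • u ∈ U)

/-!
Every element of `B` is `ad_{L₀}`-nilpotent, and since `A` is a domain of characteristic zero
the `ad_{L₀}`-degree is additive on products of such elements: by the Leibniz rule the top
iterate of `x * y` is a nonzero binomial multiple of the product of the top iterates.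

Let `s₀ ∈ S` witness condition (1) for `U`. If `a • U₀ ⊆ U`, then every `ad_{L,L₀}^n a` maps
`U₀` into `U`, so `b_n := s₀ * ad_{L,L₀}^n a` lies in `B`. Choosing `t ∈ S` with `x * t ∈ B` and
`s'` as in condition (2), the identity
`s' (s₀ ad_{L,L₀} x) t = s' ad_{L₀}(s₀ x) t - s' ad_{L₀}(s₀) (x t) + s₀ (s' (L - L₀)) (x t)`
shows `deg b_{n+1} < deg b_n` as long as `b_{n+1} ≠ 0`, so the descent must reach `0`.

Conversely, if `ad_{L,L₀}^N a = 0`, then `U + ∑_{j ≤ N} ad_{L,L₀}^j a • U₀` is stable under `L`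
and satisfies condition (1) with `s₀` times a common left denominator of the `ad_{L,L₀}^j a`;
by maximality it equals `U`, and it contains `a • U₀`.
-/

open Finset

section AdOp

variable {A : Type*} [Ring A]

def adOpAddHom (a b : A) : A →+ A := AddMonoidHom.mulLeft a - AddMonoidHom.mulRight b

lemma adOp_mul (c x y : A) : adOp c c (x * y) = adOp c c x * y + x * adOp c c y := by
  simp only [adOp]; noncomm_ring

lemma adOp_nsmul (a b x : A) (n : ℕ) : adOp a b (n • x) = n • adOp a b x :=
  map_nsmul (adOpAddHom a b) n x

lemma adOp_sum {ι : Type*} (a b : A) (s : Finset ι) (f : ι → A) :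
    adOp a b (∑ i ∈ s, f i) = ∑ i ∈ s, adOp a b (f i) :=
  map_sum (adOpAddHom a b) f s

lemma iterate_adOp_add (a b x y : A) (n : ℕ) :
    (adOp a b)^[n] (x + y) = (adOp a b)^[n] x + (adOp a b)^[n] y :=
  iterate_map_add (adOpAddHom a b) n x y

lemma iterate_adOp_sub (a b x y : A) (n : ℕ) :
    (adOp a b)^[n] (x - y) = (adOp a b)^[n] x - (adOp a b)^[n] y :=
  iterate_map_sub (adOpAddHom a b) n x y

lemma iterate_adOp_mul (c x y : A) (n : ℕ) :
    (adOp c c)^[n] (x * y) =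
      ∑ ij ∈ antidiagonal n, n.choose ij.1 • ((adOp c c)^[ij.1] x * (adOp c c)^[ij.2] y) := by
  induction n with
  | zero => simp
  | succ n ih =>
    rw [sum_antidiagonal_choose_succ_nsmul (fun i j => (adOp c c)^[i] x * (adOp c c)^[j] y) n]
    simp only [Function.iterate_succ_apply', ih, adOp_sum, adOp_nsmul, adOp_mul, smul_add,
      sum_add_distrib]
    rw [add_comm]
    congr 1
    refine sum_congr rfl fun ij hij => ?_
    rw [n.choose_symm_of_eq_add (mem_antidiagonal.1 hij).symm]

end AdOp

section Degree

variable {A : Type*} [Ring A] {a b c x y : A} {m n p q : ℕ}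

def IsAdNilpotent (c x : A) : Prop := ∃ n, (adOp c c)^[n] x = 0

lemma iterate_adOp_zero (a b : A) (n : ℕ) : (adOp a b)^[n] 0 = 0 :=
  iterate_map_zero (adOpAddHom a b) n

lemma iterate_adOp_eq_zero_of_le (h : (adOp a b)^[m] x = 0) (hmn : m ≤ n) :
    (adOp a b)^[n] x = 0 := by
  obtain ⟨k, rfl⟩ := Nat.exists_eq_add_of_le hmn
  rw [add_comm, Function.iterate_add_apply, h, iterate_adOp_zero]

lemma iterate_adOp_mul_eq_zero (hx : (adOp c c)^[p] x = 0) (hy : (adOp c c)^[q] y = 0) :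
    (adOp c c)^[p + q - 1] (x * y) = 0 := by
  rw [iterate_adOp_mul]
  refine sum_eq_zero fun ij hij => ?_
  rw [HasAntidiagonal.mem_antidiagonal] at hij
  rcases le_or_gt p ij.1 with h | h
  · rw [iterate_adOp_eq_zero_of_le hx h, zero_mul, smul_zero]
  · rw [iterate_adOp_eq_zero_of_le hy (by omega), mul_zero, smul_zero]

lemma IsAdNilpotent.mul (hx : IsAdNilpotent c x) (hy : IsAdNilpotent c y) :
    IsAdNilpotent c (x * y) :=
  let ⟨_, hp⟩ := hx; let ⟨_, hq⟩ := hy; ⟨_, iterate_adOp_mul_eq_zero hp hq⟩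

lemma iterate_adOp_mul_of_iterate_succ_eq_zero (hx : (adOp c c)^[p + 1] x = 0)
    (hy : (adOp c c)^[q + 1] y = 0) :
    (adOp c c)^[p + q] (x * y) = (p + q).choose p • ((adOp c c)^[p] x * (adOp c c)^[q] y) := by
  rw [iterate_adOp_mul, sum_eq_single (p, q)]
  · rintro ⟨i, j⟩ hij hne
    rw [HasAntidiagonal.mem_antidiagonal] at hij
    rcases le_or_gt (p + 1) i with h | h
    · rw [iterate_adOp_eq_zero_of_le hx h, zero_mul, smul_zero]
    · have : q + 1 ≤ j := by
        by_contra hj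
        exact hne (Prod.ext (by omega) (by omega))
      rw [iterate_adOp_eq_zero_of_le hy this, mul_zero, smul_zero]
  · simp

lemma IsAdNilpotent.iterate_degAd_succ (h : IsAdNilpotent c x) :
    (adOp c c)^[degAd c x + 1] x = 0 :=
  let ⟨n, hn⟩ := h
  Nat.sInf_mem (s := {n | (adOp c c)^[n + 1] x = 0})
    ⟨n, iterate_adOp_eq_zero_of_le hn n.le_succ⟩

lemma degAd_le_of_iterate_succ_eq_zero (h : (adOp c c)^[n + 1] x = 0) : degAd c x ≤ n :=
  Nat.sInf_le h

lemma degAd_lt_of_iterate_eq_zero (hx : x ≠ 0) (h : (adOp c c)^[n] x = 0) : degAd c x < n := by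
  cases n with
  | zero => exact absurd h hx
  | succ n => exact Nat.lt_succ_of_le (degAd_le_of_iterate_succ_eq_zero h)

lemma iterate_degAd_ne_zero (hx : x ≠ 0) : (adOp c c)^[degAd c x] x ≠ 0 := fun h =>
  (degAd_lt_of_iterate_eq_zero hx h).false

lemma IsAdNilpotent.iterate_eq_zero_of_degAd_lt (h : IsAdNilpotent c x) (hn : degAd c x < n) :
    (adOp c c)^[n] x = 0 :=
  iterate_adOp_eq_zero_of_le h.iterate_degAd_succ hn

variable [IsDomain A] [CharZero A]

theorem degAd_mul (hx : IsAdNilpotent c x) (hy : IsAdNilpotent c y) (hx0 : x ≠ 0) (hy0 : y ≠ 0) :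
    degAd c (x * y) = degAd c x + degAd c y := by
  have hup := iterate_adOp_mul_eq_zero hx.iterate_degAd_succ hy.iterate_degAd_succ
  have hlead :=
    iterate_adOp_mul_of_iterate_succ_eq_zero hx.iterate_degAd_succ hy.iterate_degAd_succ
  refine le_antisymm (degAd_le_of_iterate_succ_eq_zero ?_) (not_lt.1 fun hlt => ?_)
  · rwa [show degAd c x + 1 + (degAd c y + 1) - 1 = degAd c x + degAd c y + 1 by omega] at hup
  · rw [(hx.mul hy).iterate_eq_zero_of_degAd_lt hlt, nsmul_eq_mul] at hlead
    exact mul_ne_zero (Nat.cast_ne_zero.2 (Nat.choose_pos le_self_add).ne')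
      (mul_ne_zero (iterate_degAd_ne_zero hx0) (iterate_degAd_ne_zero hy0)) hlead.symm

end Degree

section Descent

variable {A : Type*} [Ring A] [IsDomain A] [CharZero A]

theorem degAd_mul_adOp_lt {L₀ L s s' t x : A}
    (hs' : s' ≠ 0) (ht : t ≠ 0) (hsx' : s * adOp L L₀ x ≠ 0)
    (hns : IsAdNilpotent L₀ s) (hns' : IsAdNilpotent L₀ s') (hnt : IsAdNilpotent L₀ t)
    (hnsx : IsAdNilpotent L₀ (s * x)) (hnxt : IsAdNilpotent L₀ (x * t))
    (hnsx' : IsAdNilpotent L₀ (s * adOp L L₀ x))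
    (hcomm : Commute s' s) (hL : (adOp L₀ L₀)^[degAd L₀ s'] (s' * (L - L₀)) = 0) :
    degAd L₀ (s * adOp L L₀ x) < degAd L₀ (s * x) := by
  set ad := adOp L₀ L₀
  have hs : s ≠ 0 := left_ne_zero_of_mul hsx'
  have hx : x ≠ 0 := by rintro rfl; simp [adOp] at hsx'
  have hid : s' * (s * adOp L L₀ x) * t =
      s' * ad (s * x) * t - s' * ad s * (x * t) + s * (s' * (L - L₀)) * (x * t) := by
    simp only [ad, adOp, ← mul_assoc s s', ← hcomm.eq]
    noncomm_ring
  have hdeg : degAd L₀ (s * x) + degAd L₀ t = degAd L₀ s + degAd L₀ (x * t) := by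
    rw [← degAd_mul hnsx hnt (mul_ne_zero hs hx) ht, ← degAd_mul hns hnxt hs (mul_ne_zero hx ht),
      mul_assoc]
  have hiter_ad {y : A} (hy : IsAdNilpotent L₀ y) : ad^[degAd L₀ y] (ad y) = 0 := by
    rw [← Function.iterate_succ_apply]; exact hy.iterate_degAd_succ
  have triple {y z w : A} {p q r : ℕ} (hy : ad^[p + 1] y = 0) (hz : ad^[q] z = 0)
      (hw : ad^[r + 1] w = 0) : ad^[p + q + r] (y * z * w) = 0 := by
    have := iterate_adOp_mul_eq_zero (iterate_adOp_mul_eq_zero hy hz) hw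
    rwa [show p + 1 + q - 1 + (r + 1) - 1 = p + q + r by omega] at this
  set F := degAd L₀ s' + degAd L₀ (s * x) + degAd L₀ t
  -- `ad` lowers the degree by one, and `hL` bounds the last term: all three terms of `hid`
  -- have degree below `F`.
  have h₁ : ad^[F] (s' * ad (s * x) * t) = 0 :=
    triple hns'.iterate_degAd_succ (hiter_ad hnsx) hnt.iterate_degAd_succ
  have h₂ : ad^[F] (s' * ad s * (x * t)) = 0 :=
    iterate_adOp_eq_zero_of_le
      (triple hns'.iterate_degAd_succ (hiter_ad hns) hnxt.iterate_degAd_succ) (by omega)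
  have h₃ : ad^[F] (s * (s' * (L - L₀)) * (x * t)) = 0 :=
    iterate_adOp_eq_zero_of_le (triple hns.iterate_degAd_succ hL hnxt.iterate_degAd_succ)
      (by omega)
  have hF : ad^[F] (s' * (s * adOp L L₀ x) * t) = 0 := by
    rw [hid, iterate_adOp_add, iterate_adOp_sub, h₁, h₂, h₃, sub_zero, add_zero]
  have hlt := degAd_lt_of_iterate_eq_zero (mul_ne_zero (mul_ne_zero hs' hsx') ht) hF
  rw [degAd_mul (hns'.mul hnsx') hnt (mul_ne_zero hs' hsx') ht,
    degAd_mul hns' hnsx' hs' hsx'] at hlt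
  omega

theorem exists_iterate_adOp_eq_zero {L₀ L s s' a : A} (hs : s ≠ 0) (hs' : s' ≠ 0)
    (hns : IsAdNilpotent L₀ s) (hns' : IsAdNilpotent L₀ s') (hcomm : Commute s' s)
    (hL : (adOp L₀ L₀)^[degAd L₀ s'] (s' * (L - L₀)) = 0)
    (hright : ∀ x : A, ∃ t ≠ 0, IsAdNilpotent L₀ t ∧ IsAdNilpotent L₀ (x * t))
    (hsa : ∀ n, IsAdNilpotent L₀ (s * (adOp L L₀)^[n] a)) :
    ∃ N, (adOp L L₀)^[N] a = 0 := by
  by_contra! ha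
  refine not_strictAnti_of_wellFoundedLT (fun n => degAd L₀ (s * (adOp L L₀)^[n] a))
    (strictAnti_nat_of_succ_lt fun n => ?_)
  obtain ⟨t, ht, hnt, hnxt⟩ := hright ((adOp L L₀)^[n] a)
  have hsucc := Function.iterate_succ_apply' (adOp L L₀) n a
  refine hsucc ▸ degAd_mul_adOp_lt hs' ht ?_ hns hns' hnt (hsa n) hnxt ?_ hcomm hL
  · exact hsucc ▸ mul_ne_zero hs (ha (n + 1))
  · exact hsucc ▸ hsa (n + 1)

end Descent

lemma cond2.exists_mem_iterate_eq_zero {k A : Type*} [CommSemiring k] [Ring A] [Nontrivial A]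
    [Algebra k A] {B R : Subalgebra k A} {S : Set A} {L₀ L : A} (h : cond2 B S L₀ L)
    (hSR : S ⊆ R) (hS0 : 0 ∉ S) (hnil : ∀ b ∈ B, IsAdNilpotent L₀ b) :
    ∃ s' ∈ R, s' ≠ 0 ∧ (adOp L₀ L₀)^[degAd L₀ s'] (s' * (L - L₀)) = 0 := by
  rcases h with rfl | ⟨s', hs'S, hs'B, -, hlt⟩
  · exact ⟨1, R.one_mem, one_ne_zero, by rw [sub_self, mul_zero, iterate_adOp_zero]⟩
  · exact ⟨s', hSR hs'S, ne_of_mem_of_not_mem hs'S hS0,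
      (hnil _ hs'B).iterate_eq_zero_of_degAd_lt hlt⟩

lemma exists_mem_forall_mul_mem {ι A σ : Type*} [Monoid A] [SetLike σ A] [MulMemClass σ A]
    {B : σ} {S : Set A} (hS1 : 1 ∈ S) (hSmul : ∀ s ∈ S, ∀ t ∈ S, s * t ∈ S) (hSB : S ⊆ B)
    (hScomm : ∀ s ∈ S, ∀ t ∈ S, Commute s t) (hleft : ∀ a : A, ∃ s ∈ S, s * a ∈ B)
    (F : Finset ι) (g : ι → A) : ∃ s ∈ S, ∀ i ∈ F, s * g i ∈ B := by
  classical
  induction F using Finset.induction_on with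
  | empty => exact ⟨1, hS1, by simp⟩
  | insert i F _ ih =>
    obtain ⟨s, hs, hsF⟩ := ih
    obtain ⟨t, ht, hti⟩ := hleft (g i)
    refine ⟨t * s, hSmul _ ht _ hs, fun j hj => ?_⟩
    rcases Finset.mem_insert.1 hj with rfl | hj
    · rw [(hScomm t ht s hs).eq, mul_assoc]
      exact mul_mem (hSB hs) hti
    · rw [mul_assoc]
      exact mul_mem (hSB ht) (hsF j hj)

section Module

variable {k A M : Type*} [CommRing k] [Ring A] [Algebra k A] [AddCommGroup M] [Module A M]
  {U U₀ : Set M}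

lemma isSubspace.sub_mem (hU : isSubspace k A U) {u v : M} (hu : u ∈ U) (hv : v ∈ U) :
    u - v ∈ U := by
  have hneg : -v ∈ U := by simpa using hU.2.2 (-1) v hv
  simpa [sub_eq_add_neg] using hU.2.1 u hu _ hneg

lemma iterate_adOp_smul_mem {L L₀ a : A} (hU : isSubspace k A U) (hLU : ∀ u ∈ U, L • u ∈ U)
    (hL₀ : ∀ u ∈ U₀, L₀ • u ∈ U₀) (ha : ∀ u ∈ U₀, a • u ∈ U) (n : ℕ) :
    ∀ u ∈ U₀, (adOp L L₀)^[n] a • u ∈ U := by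
  induction n with
  | zero => exact ha
  | succ n ih =>
    intro u hu
    rw [Function.iterate_succ_apply']
    simp only [adOp, sub_smul, mul_smul]
    exact hU.sub_mem (hLU _ (ih u hu)) (ih _ (hL₀ u hu))

/-- `U + ∑_{j < N} g j • U₀`. -/
def addSumSMul (U U₀ : Set M) (g : ℕ → A) (N : ℕ) : Set M :=
  {m | ∃ u ∈ U, ∃ w : ℕ → M, (∀ j, w j ∈ U₀) ∧ m = u + ∑ j ∈ range N, g j • w j}

variable {g : ℕ → A} {N : ℕ}

lemma subset_addSumSMul (h0 : (0 : M) ∈ U₀) : U ⊆ addSumSMul U U₀ g N :=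
  fun u hu => ⟨u, hu, 0, fun _ => h0, by simp⟩

lemma smul_mem_addSumSMul (hU0 : (0 : M) ∈ U) (h0 : (0 : M) ∈ U₀) {j : ℕ} (hj : j < N) {u : M}
    (hu : u ∈ U₀) : g j • u ∈ addSumSMul U U₀ g N := by
  classical
  refine ⟨0, hU0, Pi.single j u, fun i => ?_, ?_⟩
  · by_cases h : i = j
    · subst h; simpa using hu
    · simpa [h] using h0
  · rw [zero_add, sum_eq_single_of_mem j (mem_range.2 hj) fun i _ h => by simp [h],
      Pi.single_eq_same]

lemma isSubspace_addSumSMul (hU : isSubspace k A U) (hU₀ : isSubspace k A U₀) :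
    isSubspace k A (addSumSMul U U₀ g N) := by
  refine ⟨subset_addSumSMul hU₀.1 hU.1, ?_, ?_⟩
  · rintro _ ⟨u, hu, w, hw, rfl⟩ _ ⟨v, hv, w', hw', rfl⟩
    refine ⟨u + v, hU.2.1 u hu v hv, w + w', fun j => hU₀.2.1 _ (hw j) _ (hw' j), ?_⟩
    simp only [Pi.add_apply, smul_add, sum_add_distrib]
    abel
  · rintro c _ ⟨u, hu, w, hw, rfl⟩
    refine ⟨_, hU.2.2 c u hu, fun j => algebraMap k A c • w j, fun j => hU₀.2.2 c _ (hw j), ?_⟩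
    simp only [smul_add, smul_sum, smul_smul, Algebra.commutes]

lemma smul_mem_addSumSMul_of_forall_succ {L L₀ : A} (hU₀ : isSubspace k A U₀)
    (hLU : ∀ u ∈ U, L • u ∈ U) (hL₀ : ∀ u ∈ U₀, L₀ • u ∈ U₀)
    (hg : ∀ j, g (j + 1) = adOp L L₀ (g j)) (hgN : g N = 0) :
    ∀ m ∈ addSumSMul U U₀ g N, L • m ∈ addSumSMul U U₀ g N := by
  rintro _ ⟨u, hu, w, hw, rfl⟩
  let w' : ℕ → M := fun j => Nat.casesOn j 0 w
  have hw' : ∀ j, w' j ∈ U₀ := fun j => by cases j <;> simp [w', hU₀.1, hw]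
  have hshift : ∑ j ∈ range N, g (j + 1) • w j = ∑ j ∈ range N, g j • w' j := by
    have h := sum_range_succ' (fun j => g j • w' j) N
    rw [sum_range_succ, hgN, zero_smul, add_zero] at h
    simpa [w'] using h.symm
  refine ⟨L • u, hLU u hu, fun j => w' j + L₀ • w j,
    fun j => hU₀.2.1 _ (hw' j) _ (hL₀ _ (hw j)), ?_⟩
  have hterm : ∀ j, L • g j • w j = g (j + 1) • w j + g j • L₀ • w j := fun j => by
    rw [hg, adOp, sub_smul, smul_smul, smul_smul]; abel
  simp only [smul_add, smul_sum, hterm, sum_add_distrib, hshift]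

lemma smul_mem_of_mem_addSumSMul (hU₀ : isSubspace k A U₀) {s : A} (hsU : ∀ u ∈ U, s • u ∈ U₀)
    (hsg : ∀ j < N, ∀ u ∈ U₀, (s * g j) • u ∈ U₀) :
    ∀ m ∈ addSumSMul U U₀ g N, s • m ∈ U₀ := by
  rintro _ ⟨u, hu, w, hw, rfl⟩
  rw [smul_add, smul_sum]
  refine hU₀.2.1 _ (hsU u hu) _
    (sum_induction _ (· ∈ U₀) (fun x y hx hy => hU₀.2.1 x hx y hy) hU₀.1 fun j hj => ?_)
  rw [smul_smul]
  exact hsg j (mem_range.1 hj) _ (hw j)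

end Module

theorem stmt8_general
    {k A M : Type*} [Field k] [CharZero k] [Ring A] [IsDomain A] [Algebra k A]
    [AddCommGroup M] [Module A M]
    (B R : Subalgebra k A) (hRB : R ≤ B)
    (hRcomm : ∀ x ∈ R, ∀ y ∈ R, x * y = y * x)
    (S : Set A) (hSR : S ⊆ (R : Set A)) (hS0 : (0 : A) ∉ S) (hS1 : (1 : A) ∈ S)
    (hSmul : ∀ s ∈ S, ∀ t ∈ S, s * t ∈ S)
    (hleft : ∀ a : A, ∃ s ∈ S, s * a ∈ B)
    (hright : ∀ a : A, ∃ s ∈ S, a * s ∈ B)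
    (U₀ : Set M) (hU₀0 : (0 : M) ∈ U₀)
    (hU₀add : ∀ u ∈ U₀, ∀ v ∈ U₀, u + v ∈ U₀)
    (hU₀R : ∀ r ∈ (R : Set A), ∀ u ∈ U₀, r • u ∈ U₀)
    (hB : ∀ a : A, a ∈ B ↔ ∀ u ∈ U₀, a • u ∈ U₀)
    (L₀ : A) (hL₀ : L₀ ∈ B)
    (hnil : ∀ b ∈ B, ∃ n : ℕ, (adOp L₀ L₀)^[n] b = 0)
    (L : A) (h2 : cond2 B S L₀ L)
    (U : Set M) (hU : isSubspace k A U)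
    (hLU : ∀ u ∈ U, L • u ∈ U)
    (hcond1b : ∃ s ∈ S, (∀ u ∈ U₀, s • u ∈ U) ∧ (∀ u ∈ U, s • u ∈ U₀))
    (hUmax : ∀ U' : Set M, isSubspace k A U' → (∀ u ∈ U', L • u ∈ U') →
      (∃ s ∈ S, (∀ u ∈ U₀, s • u ∈ U') ∧ (∀ u ∈ U', s • u ∈ U₀)) → U ⊆ U' → U' = U) :
    {a : A | ∀ u ∈ U₀, a • u ∈ U} = {a : A | ∃ N : ℕ, (adOp L L₀)^[N] a = 0} := by
  have : CharZero A := charZero_of_injective_algebraMap (algebraMap k A).injective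
  obtain ⟨s₀, hs₀S, hs₀U₀, hs₀U⟩ := hcond1b
  have hSB : S ⊆ B := fun s hs => hRB (hSR hs)
  have hU₀ : isSubspace k A U₀ := ⟨hU₀0, hU₀add, fun c => hU₀R _ (R.algebraMap_mem c)⟩
  have hL₀U₀ : ∀ u ∈ U₀, L₀ • u ∈ U₀ := (hB L₀).1 hL₀
  ext a
  constructor
  · intro ha
    obtain ⟨s', hs'R, hs'0, hs'L⟩ := h2.exists_mem_iterate_eq_zero hSR hS0 hnil
    refine exists_iterate_adOp_eq_zero (ne_of_mem_of_not_mem hs₀S hS0) hs'0 (hnil _ (hSB hs₀S))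
      (hnil _ (hRB hs'R)) (hRcomm _ hs'R _ (hSR hs₀S)) hs'L (fun x => ?_) fun n => ?_
    · obtain ⟨t, htS, htB⟩ := hright x
      exact ⟨t, ne_of_mem_of_not_mem htS hS0, hnil _ (hSB htS), hnil _ htB⟩
    · refine hnil _ ((hB _).2 fun u hu => ?_)
      rw [mul_smul]
      exact hs₀U _ (iterate_adOp_smul_mem hU hLU hL₀U₀ ha n u hu)
  · rintro ⟨N, hN⟩
    set g : ℕ → A := fun j => (adOp L L₀)^[j] a
    have hgN : g (N + 1) = 0 := iterate_adOp_eq_zero_of_le hN N.le_succ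
    obtain ⟨T, hTS, hT⟩ := exists_mem_forall_mul_mem hS1 hSmul hSB
      (fun s hs t ht => hRcomm s (hSR hs) t (hSR ht)) hleft (range (N + 1)) g
    have hcond1 : (∀ u ∈ U₀, (s₀ * T) • u ∈ addSumSMul U U₀ g (N + 1)) ∧
        ∀ m ∈ addSumSMul U U₀ g (N + 1), (s₀ * T) • m ∈ U₀ := by
      refine ⟨fun u hu => ?_, smul_mem_of_mem_addSumSMul hU₀ (fun u hu => ?_) fun j hj => ?_⟩
      · exact mul_smul s₀ T u ▸ subset_addSumSMul hU₀0 (hs₀U₀ _ (hU₀R _ (hSR hTS) u hu))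
      · exact hRcomm _ (hSR hTS) _ (hSR hs₀S) ▸ mul_smul T s₀ u ▸ hU₀R _ (hSR hTS) _ (hs₀U u hu)
      · exact (hB _).1 (mul_assoc s₀ T (g j) ▸ B.mul_mem (hSB hs₀S) (hT j (mem_range.2 hj)))
    have hmax := hUmax _ (isSubspace_addSumSMul hU hU₀)
      (smul_mem_addSumSMul_of_forall_succ hU₀ hLU hL₀U₀
        (fun j => Function.iterate_succ_apply' _ j a) hgN)
      ⟨s₀ * T, hSmul _ hs₀S _ hTS, hcond1⟩ (subset_addSumSMul hU₀0)
    intro u hu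
    rw [← hmax]
    exact smul_mem_addSumSMul (g := g) hU.1 hU₀0 N.succ_pos hu

/-- Intrinsic characterization of the ideal `𝓜` (Remark 5.2, proved within Proposition 4.5):
for maximal `U`, `𝓜 = {a ∈ A : a·U₀ ⊆ U}` coincides with the set of elements of `A` on which
`ad_{L,L₀}` acts nilpotently. -/
theorem stmt8
    {k A M : Type*} [Field k] [CharZero k] [Ring A] [IsDomain A] [Algebra k A]
    [AddCommGroup M] [Module A M]
    (B R : Subalgebra k A) (hRB : R ≤ B)
    (hRcomm : ∀ x ∈ R, ∀ y ∈ R, x * y = y * x)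
    (S : Set A) (hSR : S ⊆ (R : Set A)) (hS0 : (0 : A) ∉ S) (hS1 : (1 : A) ∈ S)
    (hSmul : ∀ s ∈ S, ∀ t ∈ S, s * t ∈ S)
    (hSunit : ∀ s ∈ S, IsUnit s)
    (hleft : ∀ a : A, ∃ s ∈ S, s * a ∈ B)
    (hright : ∀ a : A, ∃ s ∈ S, a * s ∈ B)
    (U₀ : Set M) (hU₀0 : (0 : M) ∈ U₀)
    (hU₀add : ∀ u ∈ U₀, ∀ v ∈ U₀, u + v ∈ U₀)
    (hU₀neg : ∀ u ∈ U₀, -u ∈ U₀)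
    (hU₀R : ∀ r ∈ (R : Set A), ∀ u ∈ U₀, r • u ∈ U₀)
    (hB : ∀ a : A, a ∈ B ↔ ∀ u ∈ U₀, a • u ∈ U₀)
    (L₀ : A) (hL₀ : L₀ ∈ B)
    (hnil : ∀ b ∈ B, ∃ n : ℕ, (adOp L₀ L₀)^[n] b = 0)
    (L : A) (h2 : cond2 B S L₀ L)
    (U : Set M) (hU : isSubspace k A U)
    (hLU : ∀ u ∈ U, L • u ∈ U)
    (hcond1b : ∃ s ∈ S, (∀ u ∈ U₀, s • u ∈ U) ∧ (∀ u ∈ U, s • u ∈ U₀))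
    (hUmax : ∀ U' : Set M, isSubspace k A U' → (∀ u ∈ U', L • u ∈ U') →
      (∃ s ∈ S, (∀ u ∈ U₀, s • u ∈ U') ∧ (∀ u ∈ U', s • u ∈ U₀)) → U ⊆ U' → U' = U) :
    {a : A | ∀ u ∈ U₀, a • u ∈ U} = {a : A | ∃ N : ℕ, (adOp L L₀)^[N] a = 0} :=
  stmt8_general B R hRB hRcomm S hSR hS0 hS1 hSmul hleft hright U₀ hU₀0 hU₀add hU₀R hB L₀ hL₀ hnil L
    h2 U hU hLU hcond1b hUmax
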